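/- arXiv:1803.06557 — 7 statements merged into one kernel-verified Lean document; each statement's English description precedes it below -/
import Mathlib

section
/- Let Y = μ(D) + σ(D)ε where D ∈ {0,1}, Z ∈ {0,1}, E[ε|Z] = 0, Var(ε|Z) = 1, and p(z) = P(D=1|Z=z) with p(0) ≠ p(1). Define r₀ = μ(0) + (σ(1)−σ(0))·(E[Dε|Z=0]p(1) − E[Dε|Z=1]p(0))/(p(1)−p(0)) and r₁ = μ(1) − μ(0) + (σ(1)−σ(0))·(E[Dε|Z=1] − E[Dε|Z=0])/(p(1)−p(0)). Then the residual ε̃ = μ(D) + σ(D)ε − r₀ − r₁D satisfies E[ε̃|Z=0] = E[ε̃|Z=1] = 0. -/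
open MeasureTheory

/-- Conditional expectation of `f` given the event `A`. -/
noncomputable def cexpE {Ω : Type*} [MeasurableSpace Ω] (P : Measure Ω) (f : Ω → ℝ)
    (A : Set Ω) : ℝ :=
  (∫ ω in A, f ω ∂P) / (P A).toReal

theorem stmt0 {Ω : Type*} [MeasurableSpace Ω] (P : Measure Ω) [IsProbabilityMeasure P]
    (D Z ε : Ω → ℝ) (μf σf : ℝ → ℝ)
    (hD : ∀ ω, D ω = 0 ∨ D ω = 1) (hZ : ∀ ω, Z ω = 0 ∨ Z ω = 1)
    (hPz : ∀ z ∈ ({0, 1} : Set ℝ), 0 < P {ω | Z ω = z})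
    (hε1 : ∀ z ∈ ({0, 1} : Set ℝ), cexpE P ε {ω | Z ω = z} = 0)
    (hε2 : ∀ z ∈ ({0, 1} : Set ℝ), cexpE P (fun ω => (ε ω) ^ 2) {ω | Z ω = z} = 1)
    (p : ℝ → ℝ) (hp : ∀ z ∈ ({0, 1} : Set ℝ), p z = cexpE P D {ω | Z ω = z})
    (hrel : p 0 ≠ p 1)
    (hint : ∀ z ∈ ({0, 1} : Set ℝ),
      Integrable ε (P.restrict {ω | Z ω = z}) ∧
      Integrable D (P.restrict {ω | Z ω = z}) ∧
      Integrable (fun ω => D ω * ε ω) (P.restrict {ω | Z ω = z}))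
    (r0 r1 : ℝ)
    (hr0 : r0 = μf 0 + (σf 1 - σf 0) *
      ((cexpE P (fun ω => D ω * ε ω) {ω | Z ω = 0}) * p 1 -
       (cexpE P (fun ω => D ω * ε ω) {ω | Z ω = 1}) * p 0) / (p 1 - p 0))
    (hr1 : r1 = μf 1 - μf 0 + (σf 1 - σf 0) *
      ((cexpE P (fun ω => D ω * ε ω) {ω | Z ω = 1}) -
       (cexpE P (fun ω => D ω * ε ω) {ω | Z ω = 0})) / (p 1 - p 0)) :
    ∀ z ∈ ({0, 1} : Set ℝ),
      cexpE P (fun ω => μf (D ω) + σf (D ω) * ε ω - r0 - r1 * D ω) {ω | Z ω = z} = 0 := by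
  intro z hz
  obtain ⟨hiε, hiD, hiDε⟩ := hint z hz
  have hPA : 0 < P {ω | Z ω = z} := hPz z hz
  have hm : (0:ℝ) < (P {ω | Z ω = z}).toReal :=
    ENNReal.toReal_pos hPA.ne' (measure_ne_top P _)
  set m := (P {ω | Z ω = z}).toReal with hmdef
  set c0 := μf 0 - r0 with hc0
  set c1 := μf 1 - μf 0 - r1 with hc1
  set c3 := σf 1 - σf 0 with hc3
  have hfun : ∀ ω, μf (D ω) + σf (D ω) * ε ω - r0 - r1 * D ω
      = c0 + c1 * D ω + σf 0 * ε ω + c3 * (D ω * ε ω) := by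
    intro ω
    rcases hD ω with h | h <;> rw [h] <;> simp [hc0, hc1, hc3] <;> ring
  have hI : (∫ ω in {ω | Z ω = z}, (μf (D ω) + σf (D ω) * ε ω - r0 - r1 * D ω) ∂P)
      = c0 * m + c1 * (∫ ω in {ω | Z ω = z}, D ω ∂P)
        + σf 0 * (∫ ω in {ω | Z ω = z}, ε ω ∂P)
        + c3 * (∫ ω in {ω | Z ω = z}, D ω * ε ω ∂P) := by
    rw [integral_congr_ae (Filter.Eventually.of_forall hfun)]
    have i1 : Integrable (fun a => c0 + c1 * D a) (P.restrict {ω | Z ω = z}) :=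
      (integrable_const c0).add (hiD.const_mul c1)
    have i2 : Integrable (fun a => c0 + c1 * D a + σf 0 * ε a) (P.restrict {ω | Z ω = z}) :=
      i1.add (hiε.const_mul (σf 0))
    rw [integral_add i2 (hiDε.const_mul c3), integral_add i1 (hiε.const_mul (σf 0)),
      integral_add (integrable_const c0) (hiD.const_mul c1),
      integral_const, integral_const_mul, integral_const_mul, integral_const_mul]
    simp [Measure.restrict_apply_univ, hmdef, mul_comm, measureReal_def]
  have hεI : (∫ ω in {ω | Z ω = z}, ε ω ∂P) = 0 := by
    have := hε1 z hz
    unfold cexpE at this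
    rcases div_eq_zero_iff.mp this with h | h
    · exact h
    · exact absurd h hm.ne'
  have hDI : (∫ ω in {ω | Z ω = z}, D ω ∂P) = p z * m := by
    have := hp z hz
    unfold cexpE at this
    rw [this]
    field_simp; rw [← hmdef, mul_div_assoc, div_self hm.ne', mul_one]
  set q0 := cexpE P (fun ω => D ω * ε ω) {ω | Z ω = 0} with hq0
  set q1 := cexpE P (fun ω => D ω * ε ω) {ω | Z ω = 1} with hq1
  have hΔ : p 1 - p 0 ≠ 0 := sub_ne_zero.mpr (Ne.symm hrel)
  unfold cexpE
  rw [hI, hεI, hDI]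
  simp only [Set.mem_insert_iff, Set.mem_singleton_iff] at hz
  rcases hz with rfl | rfl
  · have hDεI : (∫ ω in {ω | Z ω = (0:ℝ)}, D ω * ε ω ∂P) = q0 * m := by
      rw [hq0]; unfold cexpE; field_simp; rw [← hmdef, mul_div_assoc, div_self hm.ne', mul_one]
    rw [hDεI, hc0, hc1, hc3, hr0, hr1]
    field_simp
    ring
  · have hDεI : (∫ ω in {ω | Z ω = (1:ℝ)}, D ω * ε ω ∂P) = q1 * m := by
      rw [hq1]; unfold cexpE; field_simp; rw [← hmdef, mul_div_assoc, div_self hm.ne', mul_one]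
    rw [hDεI, hc0, hc1, hc3, hr0, hr1]
    field_simp
    ring
end

section
/- Under the monotone selection model D = 1[η ≤ m(Z)] with m(0) < m(1), instrument Z independent of (ε, η), and outcome Y = μ(D) + σ(D)ε with E[ε] = 0, the linear IV coefficient r₁ = Cov(Y,Z)/Cov(D,Z) equals μ(1) − μ(0) + (σ(1)−σ(0))·E[ε | m(0) < η ≤ m(1)], provided P(m(0) < η ≤ m(1)) > 0 and P(Z=1) ∈ (0,1). -/
open MeasureTheory

/-- Covariance of two real random variables. -/
noncomputable def covE {Ω : Type*} [MeasurableSpace Ω] (P : Measure Ω) (f g : Ω → ℝ) : ℝ :=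
  (∫ ω, f ω * g ω ∂P) - (∫ ω, f ω ∂P) * (∫ ω, g ω ∂P)

open ProbabilityTheory in
/-- Auxiliary lemma: covariance of `W = U + V·Z` with a 0/1-valued `Z` independent of `U, V`. -/
lemma covE_decomp {Ω : Type*} [MeasurableSpace Ω] (P : Measure Ω) [IsProbabilityMeasure P]
    (U V Z W : Ω → ℝ) (hZ01 : ∀ ω, Z ω = 0 ∨ Z ω = 1)
    (hW : ∀ ω, W ω = U ω + V ω * Z ω)
    (hUZ : IndepFun U Z P) (hVZ : IndepFun V Z P)
    (hU : Integrable U P) (hV : Integrable V P) (hZi : Integrable Z P) :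
    covE P W Z = (∫ ω, V ω ∂P) * ((∫ ω, Z ω ∂P) * (1 - ∫ ω, Z ω ∂P)) := by
  have hZb : ∃ C, ∀ ω, ‖Z ω‖ ≤ C :=
    ⟨1, fun ω => by rcases hZ01 ω with h | h <;> simp [h]⟩
  have hZm : AEStronglyMeasurable Z P := hZi.1
  have hUZi : Integrable (fun ω => U ω * Z ω) P := by
    have := hU.bdd_mul hZm (Filter.Eventually.of_forall hZb.choose_spec)
    simpa [mul_comm] using this
  have hVZi : Integrable (fun ω => V ω * Z ω) P := by
    have := hV.bdd_mul hZm (Filter.Eventually.of_forall hZb.choose_spec)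
    simpa [mul_comm] using this
  have h1 : ∫ ω, U ω * Z ω ∂P = (∫ ω, U ω ∂P) * ∫ ω, Z ω ∂P :=
    hUZ.integral_fun_mul_eq_mul_integral hU.1 hZi.1
  have h2 : ∫ ω, V ω * Z ω ∂P = (∫ ω, V ω ∂P) * ∫ ω, Z ω ∂P :=
    hVZ.integral_fun_mul_eq_mul_integral hV.1 hZi.1
  have e1 : ∫ ω, W ω * Z ω ∂P
      = (∫ ω, U ω ∂P) * (∫ ω, Z ω ∂P) + (∫ ω, V ω ∂P) * ∫ ω, Z ω ∂P := by
    have : (fun ω => W ω * Z ω) = fun ω => U ω * Z ω + V ω * Z ω := by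
      funext ω
      rcases hZ01 ω with h | h <;> rw [hW ω, h] <;> ring
    rw [this, integral_add hUZi hVZi, h1, h2]
  have e2 : ∫ ω, W ω ∂P = (∫ ω, U ω ∂P) + (∫ ω, V ω ∂P) * ∫ ω, Z ω ∂P := by
    have : (fun ω => W ω) = fun ω => U ω + V ω * Z ω := funext hW
    rw [this, integral_add hU hVZi, h2]
  simp only [covE, e1, e2]
  ring

theorem stmt1 {Ω : Type*} [MeasurableSpace Ω] (P : Measure Ω) [IsProbabilityMeasure P]
    (Z η ε D Y : Ω → ℝ) (m μf σf : ℝ → ℝ)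
    (hm : m 0 < m 1) (hZ : ∀ ω, Z ω = 0 ∨ Z ω = 1)
    (hZmeas : Measurable Z) (hεηmeas : Measurable fun ω => (ε ω, η ω))
    (hindep : ProbabilityTheory.IndepFun (fun ω => (ε ω, η ω)) Z P)
    (hDdef : ∀ ω, D ω = if η ω ≤ m (Z ω) then 1 else 0)
    (hY : ∀ ω, Y ω = μf (D ω) + σf (D ω) * ε ω)
    (hεmean : (∫ ω, ε ω ∂P) = 0)
    (hint : Integrable ε P ∧ Integrable (fun ω => (ε ω) ^ 2) P ∧ Integrable Y P ∧
      Integrable (fun ω => Y ω * Z ω) P ∧ Integrable (fun ω => D ω * Z ω) P ∧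
      Integrable D P ∧ Integrable (fun ω => ε ω) (P.restrict {ω | m 0 < η ω ∧ η ω ≤ m 1}))
    (hCpl : 0 < P {ω | m 0 < η ω ∧ η ω ≤ m 1})
    (hPZ : 0 < P {ω | Z ω = 1} ∧ P {ω | Z ω = 1} < 1) :
    covE P Y Z / covE P D Z =
      μf 1 - μf 0 + (σf 1 - σf 0) * cexpE P ε {ω | m 0 < η ω ∧ η ω ≤ m 1} := by
  classical
  obtain ⟨hεInt, -, -, -, -, -, -⟩ := hint
  have hηmeas : Measurable η := measurable_snd.comp hεηmeas
  have hεmeas : Measurable ε := measurable_fst.comp hεηmeas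
  -- the complier set
  set C : Set Ω := {ω | m 0 < η ω ∧ η ω ≤ m 1} with hC_def
  have hCm : MeasurableSet C :=
    (measurableSet_lt measurable_const hηmeas).inter (measurableSet_le hηmeas measurable_const)
  -- indicator-like functions of η
  have haMeas : Measurable (fun ω => if η ω ≤ m 0 then (1 : ℝ) else 0) :=
    Measurable.ite (measurableSet_le hηmeas measurable_const) measurable_const measurable_const
  have hcMeas : Measurable (fun ω => if m 0 < η ω ∧ η ω ≤ m 1 then (1 : ℝ) else 0) :=
    Measurable.ite hCm measurable_const measurable_const
  have haBd : ∃ Cb, ∀ ω, ‖(if η ω ≤ m 0 then (1 : ℝ) else 0)‖ ≤ Cb :=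
    ⟨1, fun ω => by split_ifs <;> norm_num⟩
  have hcBd : ∃ Cb, ∀ ω, ‖(if m 0 < η ω ∧ η ω ≤ m 1 then (1 : ℝ) else 0)‖ ≤ Cb :=
    ⟨1, fun ω => by split_ifs <;> norm_num⟩
  have haInt : Integrable (fun ω => if η ω ≤ m 0 then (1 : ℝ) else 0) P := by
    have h : Integrable (fun ω => (if η ω ≤ m 0 then (1 : ℝ) else 0) * 1) P :=
      Integrable.bdd_mul (integrable_const 1) haMeas.aestronglyMeasurable (Filter.Eventually.of_forall haBd.choose_spec)
    simpa using h
  have hcInt : Integrable (fun ω => if m 0 < η ω ∧ η ω ≤ m 1 then (1 : ℝ) else 0) P := by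
    have h : Integrable (fun ω => (if m 0 < η ω ∧ η ω ≤ m 1 then (1 : ℝ) else 0) * 1) P :=
      Integrable.bdd_mul (integrable_const 1) hcMeas.aestronglyMeasurable (Filter.Eventually.of_forall hcBd.choose_spec)
    simpa using h
  have haεInt : Integrable (fun ω => (if η ω ≤ m 0 then (1 : ℝ) else 0) * ε ω) P :=
    hεInt.bdd_mul haMeas.aestronglyMeasurable (Filter.Eventually.of_forall haBd.choose_spec)
  have hcεInt : Integrable (fun ω => (if m 0 < η ω ∧ η ω ≤ m 1 then (1 : ℝ) else 0) * ε ω) P :=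
    hεInt.bdd_mul hcMeas.aestronglyMeasurable (Filter.Eventually.of_forall hcBd.choose_spec)
  -- Z is integrable
  have hZset : MeasurableSet {ω | Z ω = 1} := hZmeas (measurableSet_singleton 1)
  have hZeq : Z = Set.indicator {ω | Z ω = 1} (fun _ => (1 : ℝ)) := by
    funext ω
    rcases hZ ω with h | h
    · have hne : ω ∉ {ω | Z ω = 1} := fun hmem => one_ne_zero ((hmem : Z ω = 1) ▸ h)
      rw [Set.indicator_apply, if_neg hne, h]
    · have hmem : ω ∈ {ω | Z ω = 1} := h
      rw [Set.indicator_apply, if_pos hmem, h]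
  have hZi : Integrable Z P := by
    rw [hZeq]; exact (integrable_const 1).indicator hZset
  have hZmean : ∫ ω, Z ω ∂P = (P {ω | Z ω = 1}).toReal := by
    have h1 : ∫ ω, Z ω ∂P = ∫ ω, Set.indicator {ω | Z ω = 1} (fun _ => (1 : ℝ)) ω ∂P :=
      integral_congr_ae (Filter.Eventually.of_forall fun ω => congrFun hZeq ω)
    rw [h1]
    exact integral_indicator_one hZset
  -- independence of functions of (ε, η) from Z
  have hcomp : ∀ (φ : ℝ × ℝ → ℝ), Measurable φ →
      ProbabilityTheory.IndepFun (fun ω => φ (ε ω, η ω)) Z P := fun φ hφ =>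
    hindep.comp hφ measurable_id
  have hφa : Measurable (fun p : ℝ × ℝ => if p.2 ≤ m 0 then (1 : ℝ) else 0) :=
    Measurable.ite (measurableSet_le measurable_snd measurable_const)
      measurable_const measurable_const
  have hφc : Measurable (fun p : ℝ × ℝ => if m 0 < p.2 ∧ p.2 ≤ m 1 then (1 : ℝ) else 0) :=
    Measurable.ite ((measurableSet_lt measurable_const measurable_snd).inter
      (measurableSet_le measurable_snd measurable_const)) measurable_const measurable_const
  -- decomposition of D
  have hDdec : ∀ ω, D ω = (if η ω ≤ m 0 then (1 : ℝ) else 0) +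
      (if m 0 < η ω ∧ η ω ≤ m 1 then (1 : ℝ) else 0) * Z ω := by
    intro ω
    by_cases h0 : η ω ≤ m 0
    · have hD1 : D ω = 1 := by
        rw [hDdef]
        rcases hZ ω with h | h <;> rw [h]
        · exact if_pos h0
        · exact if_pos (h0.trans hm.le)
      rw [hD1, if_pos h0, if_neg (fun hcc => absurd hcc.1 (not_lt.2 h0))]
      ring
    · by_cases h1 : η ω ≤ m 1
      · have hDZ : D ω = Z ω := by
          rw [hDdef]
          rcases hZ ω with h | h <;> rw [h]
          · exact if_neg h0
          · exact if_pos h1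
        rw [hDZ, if_neg h0, if_pos (⟨not_le.1 h0, h1⟩ : m 0 < η ω ∧ η ω ≤ m 1)]
        ring
      · have hD0 : D ω = 0 := by
          rw [hDdef]
          rcases hZ ω with h | h <;> rw [h]
          · exact if_neg h0
          · exact if_neg h1
        rw [hD0, if_neg h0, if_neg (fun hcc => absurd hcc.2 h1)]
        ring
  -- decomposition of Y
  have hYdec : ∀ ω, Y ω =
      (μf 0 + (μf 1 - μf 0) * (if η ω ≤ m 0 then (1 : ℝ) else 0) + σf 0 * ε ω +
        (σf 1 - σf 0) * ((if η ω ≤ m 0 then (1 : ℝ) else 0) * ε ω)) +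
      ((μf 1 - μf 0) * (if m 0 < η ω ∧ η ω ≤ m 1 then (1 : ℝ) else 0) +
        (σf 1 - σf 0) * ((if m 0 < η ω ∧ η ω ≤ m 1 then (1 : ℝ) else 0) * ε ω)) * Z ω := by
    intro ω
    by_cases h0 : η ω ≤ m 0
    · have hD1 : D ω = 1 := by
        rw [hDdef]
        rcases hZ ω with h | h <;> rw [h]
        · exact if_pos h0
        · exact if_pos (h0.trans hm.le)
      rw [hY, hD1, if_pos h0, if_neg (fun hcc => absurd hcc.1 (not_lt.2 h0))]
      ring
    · by_cases h1 : η ω ≤ m 1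
      · have hDZ : D ω = Z ω := by
          rw [hDdef]
          rcases hZ ω with h | h <;> rw [h]
          · exact if_neg h0
          · exact if_pos h1
        rw [hY, hDZ, if_neg h0, if_pos (⟨not_le.1 h0, h1⟩ : m 0 < η ω ∧ η ω ≤ m 1)]
        rcases hZ ω with h | h <;> rw [h] <;> ring
      · have hD0 : D ω = 0 := by
          rw [hDdef]
          rcases hZ ω with h | h <;> rw [h]
          · exact if_neg h0
          · exact if_neg h1
        rw [hY, hD0, if_neg h0, if_neg (fun hcc => absurd hcc.2 h1)]
        ring
  -- covariance of D with Z
  have hcovD := covE_decomp P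
    (fun ω => if η ω ≤ m 0 then (1 : ℝ) else 0)
    (fun ω => if m 0 < η ω ∧ η ω ≤ m 1 then (1 : ℝ) else 0)
    Z D hZ hDdec (hcomp _ hφa) (hcomp _ hφc) haInt hcInt hZi
  -- covariance of Y with Z
  have hUInt : Integrable (fun ω => μf 0 + (μf 1 - μf 0) * (if η ω ≤ m 0 then (1 : ℝ) else 0) +
      σf 0 * ε ω + (σf 1 - σf 0) * ((if η ω ≤ m 0 then (1 : ℝ) else 0) * ε ω)) P :=
    (((integrable_const _).add (haInt.const_mul _)).add (hεInt.const_mul _)).add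
      (haεInt.const_mul _)
  have hVInt : Integrable (fun ω =>
      (μf 1 - μf 0) * (if m 0 < η ω ∧ η ω ≤ m 1 then (1 : ℝ) else 0) +
      (σf 1 - σf 0) * ((if m 0 < η ω ∧ η ω ≤ m 1 then (1 : ℝ) else 0) * ε ω)) P :=
    (hcInt.const_mul _).add (hcεInt.const_mul _)
  have hφU : Measurable (fun p : ℝ × ℝ =>
      μf 0 + (μf 1 - μf 0) * (if p.2 ≤ m 0 then (1 : ℝ) else 0) + σf 0 * p.1 +
      (σf 1 - σf 0) * ((if p.2 ≤ m 0 then (1 : ℝ) else 0) * p.1)) :=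
    (((measurable_const.add (hφa.const_mul _)).add (measurable_fst.const_mul _)).add
      ((hφa.mul measurable_fst).const_mul _))
  have hφV : Measurable (fun p : ℝ × ℝ =>
      (μf 1 - μf 0) * (if m 0 < p.2 ∧ p.2 ≤ m 1 then (1 : ℝ) else 0) +
      (σf 1 - σf 0) * ((if m 0 < p.2 ∧ p.2 ≤ m 1 then (1 : ℝ) else 0) * p.1)) :=
    (hφc.const_mul _).add ((hφc.mul measurable_fst).const_mul _)
  have hcovY := covE_decomp P
    (fun ω => μf 0 + (μf 1 - μf 0) * (if η ω ≤ m 0 then (1 : ℝ) else 0) + σf 0 * ε ω +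
      (σf 1 - σf 0) * ((if η ω ≤ m 0 then (1 : ℝ) else 0) * ε ω))
    (fun ω => (μf 1 - μf 0) * (if m 0 < η ω ∧ η ω ≤ m 1 then (1 : ℝ) else 0) +
      (σf 1 - σf 0) * ((if m 0 < η ω ∧ η ω ≤ m 1 then (1 : ℝ) else 0) * ε ω))
    Z Y hZ hYdec (hcomp _ hφU) (hcomp _ hφV) hUInt hVInt hZi
  -- compute the integrals of the indicator-type functions
  have hcEq : (fun ω => if m 0 < η ω ∧ η ω ≤ m 1 then (1 : ℝ) else 0) =
      Set.indicator C (fun _ => (1 : ℝ)) := by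
    funext ω
    show (if m 0 < η ω ∧ η ω ≤ m 1 then (1 : ℝ) else 0) = C.indicator (fun _ => (1 : ℝ)) ω
    by_cases h : m 0 < η ω ∧ η ω ≤ m 1
    · have hi : C.indicator (fun _ => (1 : ℝ)) ω = 1 := Set.indicator_of_mem (s := C) (a := ω) h _
      rw [if_pos h, hi]
    · have hi : C.indicator (fun _ => (1 : ℝ)) ω = 0 := Set.indicator_of_notMem (s := C) (a := ω) h _
      rw [if_neg h, hi]
  have hcMean : ∫ ω, (if m 0 < η ω ∧ η ω ≤ m 1 then (1 : ℝ) else 0) ∂P = (P C).toReal := by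
    rw [hcEq]
    exact integral_indicator_one hCm
  have hcεEq : (fun ω => (if m 0 < η ω ∧ η ω ≤ m 1 then (1 : ℝ) else 0) * ε ω) =
      Set.indicator C ε := by
    funext ω
    show (if m 0 < η ω ∧ η ω ≤ m 1 then (1 : ℝ) else 0) * ε ω = C.indicator ε ω
    by_cases h : m 0 < η ω ∧ η ω ≤ m 1
    · have hi : C.indicator ε ω = ε ω := Set.indicator_of_mem (s := C) (a := ω) h _
      rw [if_pos h, one_mul, hi]
    · have hi : C.indicator ε ω = 0 := Set.indicator_of_notMem (s := C) (a := ω) h _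
      rw [if_neg h, zero_mul, hi]
  have hcεMean : ∫ ω, (if m 0 < η ω ∧ η ω ≤ m 1 then (1 : ℝ) else 0) * ε ω ∂P =
      ∫ ω in C, ε ω ∂P := by
    rw [hcεEq]
    exact integral_indicator hCm
  -- integral of V for Y
  have hVmean : ∫ ω, ((μf 1 - μf 0) * (if m 0 < η ω ∧ η ω ≤ m 1 then (1 : ℝ) else 0) +
      (σf 1 - σf 0) * ((if m 0 < η ω ∧ η ω ≤ m 1 then (1 : ℝ) else 0) * ε ω)) ∂P =
      (μf 1 - μf 0) * (P C).toReal + (σf 1 - σf 0) * ∫ ω in C, ε ω ∂P := by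
    rw [integral_add (hcInt.const_mul _) (hcεInt.const_mul _), integral_const_mul,
      integral_const_mul, hcMean, hcεMean]
  -- positivity facts
  have hPCpos : 0 < (P C).toReal := ENNReal.toReal_pos hCpl.ne' (measure_ne_top P C)
  have hp0 : 0 < (P {ω | Z ω = 1}).toReal :=
    ENNReal.toReal_pos hPZ.1.ne' (measure_ne_top P _)
  have hp1 : (P {ω | Z ω = 1}).toReal < 1 := by
    have := (ENNReal.toReal_lt_toReal (measure_ne_top P _) ENNReal.one_ne_top).2 hPZ.2
    simpa using this
  have hq : 0 < (P {ω | Z ω = 1}).toReal * (1 - (P {ω | Z ω = 1}).toReal) :=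
    mul_pos hp0 (by linarith)
  -- conclude
  rw [hcovY, hcovD, hZmean, hcMean, hVmean]
  simp only [cexpE]
  have hp1' : 1 - (P {ω | Z ω = 1}).toReal ≠ 0 := (sub_pos.2 hp1).ne'
  field_simp
end

section
/- (Lemma 1 / key identification lemma) Suppose Y = μ(D) + σ(D)ε with D, Z ∈ {0,1}, E[ε|Z] = 0, E[ε²|Z] = 1, and p(1) ≠ p(0) where p(z) = P(D=1|Z=z). Define ξ_ℓ = (E[ε^ℓ D|Z=1] − E[ε^ℓ D|Z=0])/(p(1)−p(0)) for ℓ = 1,2, C = ξ₂ − ξ₁², δ_d = (E[Y·1(D=d)|Z=1] − E[Y·1(D=d)|Z=0])/(P(D=d|Z=1) − P(D=d|Z=0)), and V_d = (E[Y²·1(D=d)|Z=1] − E[Y²·1(D=d)|Z=0])/(P(D=d|Z=1) − P(D=d|Z=0)) − δ_d². Then for d = 0,1: δ_d = μ(d) + σ(d)·ξ₁ and V_d = σ(d)²·C. -/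
open MeasureTheory


lemma comb6' {Ω : Type*} [MeasurableSpace Ω] (ν : Measure Ω) [IsFiniteMeasure ν] (e d : Ω → ℝ)
    {a₁ a₂ a₃ a₄ a₅ a₆ : ℝ}
    (he : Integrable e ν) (hd : Integrable d ν)
    (hde : Integrable (fun ω => d ω * e ω) ν)
    (he2 : Integrable (fun ω => e ω ^ 2) ν)
    (hde2 : Integrable (fun ω => d ω * e ω ^ 2) ν) :
    ∫ ω, (a₁ * 1 + a₂ * e ω + a₃ * d ω + a₄ * (d ω * e ω) + a₅ * e ω ^ 2
        + a₆ * (d ω * e ω ^ 2)) ∂ν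
      = a₁ * (ν Set.univ).toReal + a₂ * ∫ ω, e ω ∂ν + a₃ * ∫ ω, d ω ∂ν
        + a₄ * ∫ ω, d ω * e ω ∂ν + a₅ * ∫ ω, e ω ^ 2 ∂ν
        + a₆ * ∫ ω, d ω * e ω ^ 2 ∂ν := by
  have H₁ : Integrable (fun _ : Ω => a₁ * (1:ℝ)) ν := integrable_const _
  have H₂ := he.const_mul a₂
  have H₃ := hd.const_mul a₃
  have H₄ := hde.const_mul a₄
  have H₅ := he2.const_mul a₅
  have H₆ := hde2.const_mul a₆
  have h12 : Integrable (fun x => a₁ * 1 + a₂ * e x) ν := H₁.add H₂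
  have h13 : Integrable (fun x => a₁ * 1 + a₂ * e x + a₃ * d x) ν := h12.add H₃
  have h14 : Integrable (fun x => a₁ * 1 + a₂ * e x + a₃ * d x + a₄ * (d x * e x)) ν := h13.add H₄
  have h15 : Integrable (fun x => a₁ * 1 + a₂ * e x + a₃ * d x + a₄ * (d x * e x) + a₅ * e x ^ 2) ν := h14.add H₅
  rw [integral_add h15 H₆, integral_add h14 H₅, integral_add h13 H₄, integral_add h12 H₃,
      integral_add H₁ H₂,
      integral_const_mul, integral_const_mul, integral_const_mul,
      integral_const_mul, integral_const_mul, integral_const_mul, integral_const]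
  simp [smul_eq_mul, Measure.real]


theorem stmt4 {Ω : Type*} [MeasurableSpace Ω] (P : Measure Ω) [IsProbabilityMeasure P]
    (D Z ε Y : Ω → ℝ) (μf σf : ℝ → ℝ)
    (hD : ∀ ω, D ω = 0 ∨ D ω = 1) (hZ : ∀ ω, Z ω = 0 ∨ Z ω = 1)
    (hPz : ∀ z ∈ ({0, 1} : Set ℝ), 0 < P {ω | Z ω = z})
    (hY : ∀ ω, Y ω = μf (D ω) + σf (D ω) * ε ω)
    (hε1 : ∀ z ∈ ({0, 1} : Set ℝ), cexpE P ε {ω | Z ω = z} = 0)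
    (hε2 : ∀ z ∈ ({0, 1} : Set ℝ), cexpE P (fun ω => (ε ω) ^ 2) {ω | Z ω = z} = 1)
    (p : ℝ → ℝ) (hp : ∀ z ∈ ({0, 1} : Set ℝ), p z = cexpE P D {ω | Z ω = z})
    (hrel : p 1 ≠ p 0)
    (hint : ∀ z ∈ ({0, 1} : Set ℝ),
      Integrable ε (P.restrict {ω | Z ω = z}) ∧
      Integrable D (P.restrict {ω | Z ω = z}) ∧
      Integrable (fun ω => D ω * ε ω) (P.restrict {ω | Z ω = z}) ∧
      Integrable (fun ω => D ω * (ε ω) ^ 2) (P.restrict {ω | Z ω = z}) ∧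
      Integrable Y (P.restrict {ω | Z ω = z}) ∧
      Integrable (fun ω => (Y ω) ^ 2) (P.restrict {ω | Z ω = z}))
    (ξ₁ ξ₂ C : ℝ)
    (hξ₁ : ξ₁ = (cexpE P (fun ω => ε ω * D ω) {ω | Z ω = 1} -
        cexpE P (fun ω => ε ω * D ω) {ω | Z ω = 0}) / (p 1 - p 0))
    (hξ₂ : ξ₂ = (cexpE P (fun ω => (ε ω) ^ 2 * D ω) {ω | Z ω = 1} -
        cexpE P (fun ω => (ε ω) ^ 2 * D ω) {ω | Z ω = 0}) / (p 1 - p 0))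
    (hC : C = ξ₂ - ξ₁ ^ 2)
    (δ V : ℝ → ℝ)
    (hδ : ∀ d ∈ ({0, 1} : Set ℝ),
      δ d = (cexpE P (fun ω => Y ω * (if D ω = d then 1 else 0)) {ω | Z ω = 1} -
          cexpE P (fun ω => Y ω * (if D ω = d then 1 else 0)) {ω | Z ω = 0}) /
        (cexpE P (fun ω => if D ω = d then 1 else 0) {ω | Z ω = 1} -
          cexpE P (fun ω => if D ω = d then 1 else 0) {ω | Z ω = 0}))
    (hV : ∀ d ∈ ({0, 1} : Set ℝ),
      V d = (cexpE P (fun ω => (Y ω) ^ 2 * (if D ω = d then 1 else 0)) {ω | Z ω = 1} -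
          cexpE P (fun ω => (Y ω) ^ 2 * (if D ω = d then 1 else 0)) {ω | Z ω = 0}) /
        (cexpE P (fun ω => if D ω = d then 1 else 0) {ω | Z ω = 1} -
          cexpE P (fun ω => if D ω = d then 1 else 0) {ω | Z ω = 0}) - (δ d) ^ 2) :
    ∀ d ∈ ({0, 1} : Set ℝ), δ d = μf d + σf d * ξ₁ ∧ V d = (σf d) ^ 2 * C := by
  
  have h01 : (0:ℝ) ∈ ({0, 1} : Set ℝ) := by simp
  have h11 : (1:ℝ) ∈ ({0, 1} : Set ℝ) := by simp
  have hne : p 1 - p 0 ≠ 0 := sub_ne_zero.mpr hrel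
  have key : ∀ z ∈ ({0, 1} : Set ℝ),
      cexpE P (fun ω => if D ω = (1:ℝ) then (1:ℝ) else 0) {ω | Z ω = z} = p z ∧
      cexpE P (fun ω => if D ω = (0:ℝ) then (1:ℝ) else 0) {ω | Z ω = z} = 1 - p z ∧
      cexpE P (fun ω => Y ω * (if D ω = (1:ℝ) then 1 else 0)) {ω | Z ω = z}
        = μf 1 * p z + σf 1 * cexpE P (fun ω => ε ω * D ω) {ω | Z ω = z} ∧
      cexpE P (fun ω => Y ω * (if D ω = (0:ℝ) then 1 else 0)) {ω | Z ω = z}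
        = μf 0 * (1 - p z) - σf 0 * cexpE P (fun ω => ε ω * D ω) {ω | Z ω = z} ∧
      cexpE P (fun ω => (Y ω) ^ 2 * (if D ω = (1:ℝ) then 1 else 0)) {ω | Z ω = z}
        = μf 1 ^ 2 * p z + 2 * μf 1 * σf 1 * cexpE P (fun ω => ε ω * D ω) {ω | Z ω = z}
          + σf 1 ^ 2 * cexpE P (fun ω => (ε ω) ^ 2 * D ω) {ω | Z ω = z} ∧
      cexpE P (fun ω => (Y ω) ^ 2 * (if D ω = (0:ℝ) then 1 else 0)) {ω | Z ω = z}
        = μf 0 ^ 2 * (1 - p z) - 2 * μf 0 * σf 0 * cexpE P (fun ω => ε ω * D ω) {ω | Z ω = z}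
          + σf 0 ^ 2 * (1 - cexpE P (fun ω => (ε ω) ^ 2 * D ω) {ω | Z ω = z}) := by
    intro z hz
    set A := {ω | Z ω = z} with hA
    set m := (P A).toReal with hm
    have hm0 : 0 < m := ENNReal.toReal_pos (hPz z hz).ne' (measure_ne_top P A)
    have hmne : m ≠ 0 := hm0.ne'
    obtain ⟨iε, iD, iDε, iDε2, iY, iY2⟩ := hint z hz
    have iε2 : Integrable (fun ω => (ε ω) ^ 2) (P.restrict A) := by
      by_contra h
      have h2 := hε2 z hz
      rw [cexpE, integral_undef h, zero_div] at h2
      exact one_ne_zero h2.symm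
    have hres : ((P.restrict A) Set.univ).toReal = m := by
      rw [Measure.restrict_apply_univ]
    have Iε : ∫ ω in A, ε ω ∂P = 0 := by
      have h := hε1 z hz
      rw [cexpE, div_eq_zero_iff] at h
      rcases h with h | h
      · exact h
      · exact absurd h hmne
    have Iε2 : ∫ ω in A, (ε ω) ^ 2 ∂P = m := by
      have h := hε2 z hz
      rw [cexpE, div_eq_one_iff_eq hmne] at h
      exact h
    have ID : ∫ ω in A, D ω ∂P = p z * m := by
      have h := (hp z hz).symm
      rw [cexpE, div_eq_iff hmne] at h
      exact h
    have cεD : cexpE P (fun ω => ε ω * D ω) A = (∫ ω in A, D ω * ε ω ∂P) / m := by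
      rw [cexpE, show (fun ω => ε ω * D ω) = fun ω => D ω * ε ω from
        funext fun ω => mul_comm _ _]
    have cε2D : cexpE P (fun ω => (ε ω) ^ 2 * D ω) A = (∫ ω in A, D ω * (ε ω) ^ 2 ∂P) / m := by
      rw [cexpE, show (fun ω => (ε ω) ^ 2 * D ω) = fun ω => D ω * (ε ω) ^ 2 from
        funext fun ω => mul_comm _ _]
    refine ⟨?_, ?_, ?_, ?_, ?_, ?_⟩
    · have E : (fun ω => if D ω = (1:ℝ) then (1:ℝ) else 0)
          = fun ω => (0:ℝ) * 1 + 0 * ε ω + 1 * D ω + 0 * (D ω * ε ω) + 0 * (ε ω) ^ 2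
            + 0 * (D ω * (ε ω) ^ 2) :=
        funext fun ω => by rcases hD ω with h | h <;> norm_num [h]
      rw [cexpE, E, comb6' _ ε D iε iD iDε iε2 iDε2, hres, Iε, Iε2, ID]
      simp only [← hm, ← hA]
      field_simp
      ring
    · have E : (fun ω => if D ω = (0:ℝ) then (1:ℝ) else 0)
          = fun ω => (1:ℝ) * 1 + 0 * ε ω + (-1) * D ω + 0 * (D ω * ε ω) + 0 * (ε ω) ^ 2
            + 0 * (D ω * (ε ω) ^ 2) :=
        funext fun ω => by rcases hD ω with h | h <;> norm_num [h]
      rw [cexpE, E, comb6' _ ε D iε iD iDε iε2 iDε2, hres, Iε, Iε2, ID]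
      simp only [← hm, ← hA]
      field_simp
      ring
    · have E : (fun ω => Y ω * (if D ω = (1:ℝ) then 1 else 0))
          = fun ω => (0:ℝ) * 1 + 0 * ε ω + μf 1 * D ω + σf 1 * (D ω * ε ω) + 0 * (ε ω) ^ 2
            + 0 * (D ω * (ε ω) ^ 2) :=
        funext fun ω => by rcases hD ω with h | h <;> simp [h, hY ω] <;> ring
      rw [cexpE, E, comb6' _ ε D iε iD iDε iε2 iDε2, hres, Iε, Iε2, ID, cεD]
      simp only [← hm, ← hA]
      field_simp
      ring
    · have E : (fun ω => Y ω * (if D ω = (0:ℝ) then 1 else 0))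
          = fun ω => μf 0 * 1 + σf 0 * ε ω + (-μf 0) * D ω + (-σf 0) * (D ω * ε ω)
            + 0 * (ε ω) ^ 2 + 0 * (D ω * (ε ω) ^ 2) :=
        funext fun ω => by rcases hD ω with h | h <;> simp [h, hY ω] <;> ring
      rw [cexpE, E, comb6' _ ε D iε iD iDε iε2 iDε2, hres, Iε, Iε2, ID, cεD]
      simp only [← hm, ← hA]
      field_simp
      ring
    · have E : (fun ω => (Y ω) ^ 2 * (if D ω = (1:ℝ) then 1 else 0))
          = fun ω => (0:ℝ) * 1 + 0 * ε ω + μf 1 ^ 2 * D ω + (2 * μf 1 * σf 1) * (D ω * ε ω)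
            + 0 * (ε ω) ^ 2 + σf 1 ^ 2 * (D ω * (ε ω) ^ 2) :=
        funext fun ω => by rcases hD ω with h | h <;> simp [h, hY ω] <;> ring
      rw [cexpE, E, comb6' _ ε D iε iD iDε iε2 iDε2, hres, Iε, Iε2, ID, cεD, cε2D]
      simp only [← hm, ← hA]
      field_simp
      ring
    · have E : (fun ω => (Y ω) ^ 2 * (if D ω = (0:ℝ) then 1 else 0))
          = fun ω => μf 0 ^ 2 * 1 + (2 * μf 0 * σf 0) * ε ω + (-(μf 0 ^ 2)) * D ω
            + (-(2 * μf 0 * σf 0)) * (D ω * ε ω) + σf 0 ^ 2 * (ε ω) ^ 2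
            + (-(σf 0 ^ 2)) * (D ω * (ε ω) ^ 2) :=
        funext fun ω => by rcases hD ω with h | h <;> simp [h, hY ω] <;> ring
      rw [cexpE, E, comb6' _ ε D iε iD iDε iε2 iDε2, hres, Iε, Iε2, ID, cεD, cε2D]
      simp only [← hm, ← hA]
      field_simp
      ring
  set E1 := cexpE P (fun ω => ε ω * D ω) {ω | Z ω = 1} with hE1
  set E0 := cexpE P (fun ω => ε ω * D ω) {ω | Z ω = 0} with hE0
  set S1 := cexpE P (fun ω => (ε ω) ^ 2 * D ω) {ω | Z ω = 1} with hS1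
  set S0 := cexpE P (fun ω => (ε ω) ^ 2 * D ω) {ω | Z ω = 0} with hS0
  obtain ⟨k1a, k1b, k1c, k1d, k1e, k1f⟩ := key 1 h11
  obtain ⟨k0a, k0b, k0c, k0d, k0e, k0f⟩ := key 0 h01
  intro d hd
  have hδ' := hδ d hd
  have hV' := hV d hd
  rcases hd with hd | hd
  · -- d = 0
    subst hd
    rw [k1b, k0b, k1d, k0d,
      show (1:ℝ) - p 1 - (1 - p 0) = -(p 1 - p 0) from by ring, div_neg] at hδ'
    rw [k1b, k0b, k1f, k0f,
      show (1:ℝ) - p 1 - (1 - p 0) = -(p 1 - p 0) from by ring, div_neg] at hV'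
    have hδv : δ 0 = μf 0 + σf 0 * ξ₁ := by
      rw [hδ', hξ₁]; field_simp; ring
    refine ⟨hδv, ?_⟩
    rw [hV', hδv, hC, hξ₁, hξ₂]
    field_simp
    ring
  · -- d = 1
    simp only [Set.mem_singleton_iff] at hd
    subst hd
    rw [k1a, k0a, k1c, k0c] at hδ'
    rw [k1a, k0a, k1e, k0e] at hV'
    have hδv : δ 1 = μf 1 + σf 1 * ξ₁ := by
      rw [hδ', hξ₁]; field_simp; ring
    refine ⟨hδv, ?_⟩
    rw [hV', hδv, hC, hξ₁, hξ₂]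
    field_simp
    ring
end

section
/- (Lemma on IV residuals detecting endogenous heteroskedasticity, algebraic core) Suppose Y = μ(D) + σ(D)ε with D, Z ∈ {0,1}, E[ε|D,Z] structure such that E[ε|Z=z]=0, E[ε²|Z=z]=1, p(1) ≠ p(0), and C = ξ₂ − ξ₁² ≠ 0 with ξ_ℓ = (E[ε^ℓD|Z=1] − E[ε^ℓD|Z=0])/(p(1)−p(0)). Let r̃₁ = Cov(Y,Z)/Cov(D,Z) and r̃₀ such that ε̃ = Y − r̃₀ − r̃₁D satisfies E[ε̃|Z=z]=0. Then E[ε̃²|Z=0] = E[ε̃²|Z=1] if and only if σ(0)² = σ(1)². -/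
open MeasureTheory

lemma cexpE_lin5 {Ω : Type*} [MeasurableSpace Ω] (P : Measure Ω) [IsProbabilityMeasure P]
    (A : Set Ω) (hA : P A ≠ 0)
    (f1 f2 f3 f4 f5 : Ω → ℝ)
    (h1 : Integrable f1 (P.restrict A)) (h2 : Integrable f2 (P.restrict A))
    (h3 : Integrable f3 (P.restrict A)) (h4 : Integrable f4 (P.restrict A))
    (h5 : Integrable f5 (P.restrict A))
    (k0 k1 k2 k3 k4 k5 : ℝ) :
    cexpE P (fun ω => k0 + k1 * f1 ω + k2 * f2 ω + k3 * f3 ω + k4 * f4 ω + k5 * f5 ω) A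
      = k0 + k1 * cexpE P f1 A + k2 * cexpE P f2 A + k3 * cexpE P f3 A
        + k4 * cexpE P f4 A + k5 * cexpE P f5 A := by
  have hT : (P A).toReal ≠ 0 :=
    ENNReal.toReal_ne_zero.mpr ⟨hA, measure_ne_top P A⟩
  have i1 := h1.const_mul k1
  have i2 := h2.const_mul k2
  have i3 := h3.const_mul k3
  have i4 := h4.const_mul k4
  have i5 := h5.const_mul k5
  have j1 : Integrable (fun ω => k0 + k1 * f1 ω) (P.restrict A) :=
    (integrable_const k0).add i1
  have j2 : Integrable (fun ω => k0 + k1 * f1 ω + k2 * f2 ω) (P.restrict A) := j1.add i2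
  have j3 : Integrable (fun ω => k0 + k1 * f1 ω + k2 * f2 ω + k3 * f3 ω) (P.restrict A) :=
    j2.add i3
  have j4 : Integrable (fun ω => k0 + k1 * f1 ω + k2 * f2 ω + k3 * f3 ω + k4 * f4 ω)
      (P.restrict A) := j3.add i4
  have e1 : ∫ ω in A, (k0 + k1 * f1 ω) ∂P
      = k0 * (P A).toReal + k1 * ∫ ω in A, f1 ω ∂P := by
    rw [integral_add (integrable_const k0) i1, integral_const_mul, setIntegral_const]
    simp [mul_comm, Measure.real]
  have e2 : ∫ ω in A, (k0 + k1 * f1 ω + k2 * f2 ω) ∂P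
      = k0 * (P A).toReal + k1 * (∫ ω in A, f1 ω ∂P) + k2 * ∫ ω in A, f2 ω ∂P := by
    rw [integral_add j1 i2, integral_const_mul, e1]
  have e3 : ∫ ω in A, (k0 + k1 * f1 ω + k2 * f2 ω + k3 * f3 ω) ∂P
      = k0 * (P A).toReal + k1 * (∫ ω in A, f1 ω ∂P) + k2 * (∫ ω in A, f2 ω ∂P)
        + k3 * ∫ ω in A, f3 ω ∂P := by
    rw [integral_add j2 i3, integral_const_mul, e2]
  have e4 : ∫ ω in A, (k0 + k1 * f1 ω + k2 * f2 ω + k3 * f3 ω + k4 * f4 ω) ∂P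
      = k0 * (P A).toReal + k1 * (∫ ω in A, f1 ω ∂P) + k2 * (∫ ω in A, f2 ω ∂P)
        + k3 * (∫ ω in A, f3 ω ∂P) + k4 * ∫ ω in A, f4 ω ∂P := by
    rw [integral_add j3 i4, integral_const_mul, e3]
  have e5 : ∫ ω in A, (k0 + k1 * f1 ω + k2 * f2 ω + k3 * f3 ω + k4 * f4 ω + k5 * f5 ω) ∂P
      = k0 * (P A).toReal + k1 * (∫ ω in A, f1 ω ∂P) + k2 * (∫ ω in A, f2 ω ∂P)
        + k3 * (∫ ω in A, f3 ω ∂P) + k4 * (∫ ω in A, f4 ω ∂P)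
        + k5 * ∫ ω in A, f5 ω ∂P := by
    rw [integral_add j4 i5, integral_const_mul, e4]
  unfold cexpE
  rw [e5]
  field_simp

theorem stmt13 {Ω : Type*} [MeasurableSpace Ω] (P : Measure Ω) [IsProbabilityMeasure P]
    (D Z ε Y : Ω → ℝ) (μf σf : ℝ → ℝ)
    (hD : ∀ ω, D ω = 0 ∨ D ω = 1) (hZ : ∀ ω, Z ω = 0 ∨ Z ω = 1)
    (hPz : ∀ z ∈ ({0, 1} : Set ℝ), 0 < P {ω | Z ω = z})
    (hσ : 0 ≤ σf 0 ∧ 0 ≤ σf 1)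
    (hY : ∀ ω, Y ω = μf (D ω) + σf (D ω) * ε ω)
    (hε1 : ∀ z ∈ ({0, 1} : Set ℝ), cexpE P ε {ω | Z ω = z} = 0)
    (hε2 : ∀ z ∈ ({0, 1} : Set ℝ), cexpE P (fun ω => (ε ω) ^ 2) {ω | Z ω = z} = 1)
    (p : ℝ → ℝ) (hp : ∀ z ∈ ({0, 1} : Set ℝ), p z = cexpE P D {ω | Z ω = z})
    (hrel : p 1 ≠ p 0)
    (ξ₁ ξ₂ C : ℝ)
    (hξ₁ : ξ₁ = (cexpE P (fun ω => ε ω * D ω) {ω | Z ω = 1} -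
        cexpE P (fun ω => ε ω * D ω) {ω | Z ω = 0}) / (p 1 - p 0))
    (hξ₂ : ξ₂ = (cexpE P (fun ω => (ε ω) ^ 2 * D ω) {ω | Z ω = 1} -
        cexpE P (fun ω => (ε ω) ^ 2 * D ω) {ω | Z ω = 0}) / (p 1 - p 0))
    (hC : C = ξ₂ - ξ₁ ^ 2) (hCne : C ≠ 0)
    (hint : ∀ z ∈ ({0, 1} : Set ℝ),
      Integrable ε (P.restrict {ω | Z ω = z}) ∧
      Integrable D (P.restrict {ω | Z ω = z}) ∧
      Integrable (fun ω => ε ω * D ω) (P.restrict {ω | Z ω = z}) ∧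
      Integrable (fun ω => (ε ω) ^ 2 * D ω) (P.restrict {ω | Z ω = z}) ∧
      Integrable Y (P.restrict {ω | Z ω = z}) ∧
      Integrable (fun ω => (Y ω) ^ 2) (P.restrict {ω | Z ω = z}))
    (r0 r1 : ℝ)
    (hr1 : r1 = covE P Y Z / covE P D Z)
    (hr0 : ∀ z ∈ ({0, 1} : Set ℝ),
      cexpE P (fun ω => Y ω - r0 - r1 * D ω) {ω | Z ω = z} = 0) :
    cexpE P (fun ω => (Y ω - r0 - r1 * D ω) ^ 2) {ω | Z ω = 0} =
      cexpE P (fun ω => (Y ω - r0 - r1 * D ω) ^ 2) {ω | Z ω = 1} ↔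
    (σf 0) ^ 2 = (σf 1) ^ 2 := by
  -- abbreviations
  set a := μf 0 - r0 with ha
  set b := μf 1 - μf 0 - r1 with hb
  set c := σf 1 - σf 0 with hc
  set s := σf 0 with hs
  -- pointwise identities
  have hg : ∀ ω, Y ω - r0 - r1 * D ω
      = a + s * ε ω + 0 * (ε ω ^ 2) + b * D ω + c * (ε ω * D ω) + 0 * (ε ω ^ 2 * D ω) := by
    intro ω
    rcases hD ω with h | h <;> simp only [hY ω, h, ha, hb, hc, hs] <;> ring
  have hg2 : ∀ ω, (Y ω - r0 - r1 * D ω) ^ 2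
      = a ^ 2 + (2 * a * s) * ε ω + s ^ 2 * (ε ω ^ 2) + (b ^ 2 + 2 * a * b) * D ω
        + (2 * (a * c + s * b + b * c)) * (ε ω * D ω)
        + (c ^ 2 + 2 * s * c) * (ε ω ^ 2 * D ω) := by
    intro ω
    rcases hD ω with h | h <;> simp only [hY ω, h, ha, hb, hc, hs] <;> ring
  -- integrability of ε² on each conditioning event
  have hε2int : ∀ z ∈ ({0, 1} : Set ℝ),
      Integrable (fun ω => ε ω ^ 2) (P.restrict {ω | Z ω = z}) := by
    intro z hz
    by_contra h
    have h0 : ∫ ω in {ω | Z ω = z}, ε ω ^ 2 ∂P = 0 := integral_undef h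
    have h1 := hε2 z hz
    rw [cexpE, h0, zero_div] at h1
    norm_num at h1
  -- main moment computation
  have key : ∀ z ∈ ({0, 1} : Set ℝ),
      (a + b * p z + c * cexpE P (fun ω => ε ω * D ω) {ω | Z ω = z} = 0) ∧
      cexpE P (fun ω => (Y ω - r0 - r1 * D ω) ^ 2) {ω | Z ω = z}
        = a ^ 2 + s ^ 2 + (b ^ 2 + 2 * a * b) * p z
          + (2 * (a * c + s * b + b * c)) * cexpE P (fun ω => ε ω * D ω) {ω | Z ω = z}
          + (c ^ 2 + 2 * s * c) * cexpE P (fun ω => (ε ω) ^ 2 * D ω) {ω | Z ω = z} := by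
    intro z hz
    obtain ⟨iε, iD, iεD, iε2D, iY, iY2⟩ := hint z hz
    have iε2 := hε2int z hz
    have hA : P {ω | Z ω = z} ≠ 0 := (hPz z hz).ne'
    constructor
    · have h1 := hr0 z hz
      rw [show (fun ω => Y ω - r0 - r1 * D ω)
          = (fun ω => a + s * ε ω + 0 * (ε ω ^ 2) + b * D ω + c * (ε ω * D ω)
            + 0 * (ε ω ^ 2 * D ω)) from funext hg] at h1
      rw [cexpE_lin5 P _ hA ε (fun ω => ε ω ^ 2) D (fun ω => ε ω * D ω)
          (fun ω => ε ω ^ 2 * D ω) iε iε2 iD iεD iε2D a s 0 b c 0] at h1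
      rw [hε1 z hz, ← hp z hz] at h1
      linarith [h1]
    · rw [show (fun ω => (Y ω - r0 - r1 * D ω) ^ 2)
          = (fun ω => a ^ 2 + (2 * a * s) * ε ω + s ^ 2 * (ε ω ^ 2)
            + (b ^ 2 + 2 * a * b) * D ω + (2 * (a * c + s * b + b * c)) * (ε ω * D ω)
            + (c ^ 2 + 2 * s * c) * (ε ω ^ 2 * D ω)) from funext hg2]
      rw [cexpE_lin5 P _ hA ε (fun ω => ε ω ^ 2) D (fun ω => ε ω * D ω)
          (fun ω => ε ω ^ 2 * D ω) iε iε2 iD iεD iε2D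
          (a ^ 2) (2 * a * s) (s ^ 2) (b ^ 2 + 2 * a * b)
          (2 * (a * c + s * b + b * c)) (c ^ 2 + 2 * s * c)]
      rw [hε1 z hz, hε2 z hz, ← hp z hz]
      ring
  have h0mem : (0 : ℝ) ∈ ({0, 1} : Set ℝ) := by norm_num
  have h1mem : (1 : ℝ) ∈ ({0, 1} : Set ℝ) := by norm_num
  obtain ⟨eq0, V0⟩ := key 0 h0mem
  obtain ⟨eq1, V1⟩ := key 1 h1mem
  set m0 := cexpE P (fun ω => ε ω * D ω) {ω | Z ω = 0} with hm0
  set m1 := cexpE P (fun ω => ε ω * D ω) {ω | Z ω = 1} with hm1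
  set q0 := cexpE P (fun ω => (ε ω) ^ 2 * D ω) {ω | Z ω = 0} with hq0
  set q1 := cexpE P (fun ω => (ε ω) ^ 2 * D ω) {ω | Z ω = 1} with hq1
  have hΔp : p 1 - p 0 ≠ 0 := sub_ne_zero.mpr hrel
  have hm : m1 - m0 = ξ₁ * (p 1 - p 0) := by
    rw [hξ₁]; field_simp
  have hq : q1 - q0 = ξ₂ * (p 1 - p 0) := by
    rw [hξ₂]; field_simp
  have hbξ : b = -c * ξ₁ := by
    have h : b * (p 1 - p 0) + c * (ξ₁ * (p 1 - p 0)) = 0 := by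
      rw [← hm]; linarith [eq0, eq1]
    have h2 : (b + c * ξ₁) * (p 1 - p 0) = 0 := by ring_nf; ring_nf at h; linarith
    rcases mul_eq_zero.mp h2 with h3 | h3
    · linarith
    · exact absurd h3 hΔp
  have keydiff : cexpE P (fun ω => (Y ω - r0 - r1 * D ω) ^ 2) {ω | Z ω = 1}
      - cexpE P (fun ω => (Y ω - r0 - r1 * D ω) ^ 2) {ω | Z ω = 0}
      = ((σf 1) ^ 2 - (σf 0) ^ 2) * C * (p 1 - p 0) := by
    rw [V1, V0, hC]
    have hσ1 : σf 1 = s + c := by rw [hs, hc]; ring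
    rw [hσ1, ← hs]
    linear_combination (2 * (a * c + s * b + b * c)) * hm + (c ^ 2 + 2 * s * c) * hq
      + ((b - c * ξ₁ + 2 * a) * (p 1 - p 0) + 2 * (s + c) * ξ₁ * (p 1 - p 0)) * hbξ
  constructor
  · intro h
    have h2 : ((σf 1) ^ 2 - (σf 0) ^ 2) * C * (p 1 - p 0) = 0 := by
      rw [← keydiff, h]; ring
    rcases mul_eq_zero.mp h2 with h3 | h3
    · rcases mul_eq_zero.mp h3 with h4 | h4
      · linarith
      · exact absurd h4 hCne
    · exact absurd h3 hΔp
  · intro h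
    have : cexpE P (fun ω => (Y ω - r0 - r1 * D ω) ^ 2) {ω | Z ω = 1}
        - cexpE P (fun ω => (Y ω - r0 - r1 * D ω) ^ 2) {ω | Z ω = 0} = 0 := by
      rw [keydiff, h]; ring
    linarith
end

section
/- (Key algebraic identity in the proof of the exogeneity test) With the notation δ-terms as in the model, the difference of conditional second moments of the IV-projection residual satisfies: (E[(Y − r̃₀ − r̃₁D)²|Z=1] − E[(Y − r̃₀ − r̃₁D)²|Z=0]) / (p(1)−p(0)) = (σ(1)² − σ(0)²)·(ξ₂ − ξ₁²), where r̃₁ = μ(1) − μ(0) + (σ(1)−σ(0))ξ₁ and r̃₀ = μ(0) − (σ(1)−σ(0))·(E[εD|Z=1]p(0) − E[εD|Z=0]p(1))/(p(1)−p(0)). -/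
open MeasureTheory

set_option maxHeartbeats 4000000 in
theorem stmt14 {Ω : Type*} [MeasurableSpace Ω] (P : Measure Ω) [IsProbabilityMeasure P]
    (D Z ε Y : Ω → ℝ) (μf σf : ℝ → ℝ)
    (hD : ∀ ω, D ω = 0 ∨ D ω = 1) (hZ : ∀ ω, Z ω = 0 ∨ Z ω = 1)
    (hPz : ∀ z ∈ ({0, 1} : Set ℝ), 0 < P {ω | Z ω = z})
    (hY : ∀ ω, Y ω = μf (D ω) + σf (D ω) * ε ω)
    (hε1 : ∀ z ∈ ({0, 1} : Set ℝ), cexpE P ε {ω | Z ω = z} = 0)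
    (hε2 : ∀ z ∈ ({0, 1} : Set ℝ), cexpE P (fun ω => (ε ω) ^ 2) {ω | Z ω = z} = 1)
    (p : ℝ → ℝ) (hp : ∀ z ∈ ({0, 1} : Set ℝ), p z = cexpE P D {ω | Z ω = z})
    (hrel : p 1 ≠ p 0)
    (ξ₁ ξ₂ : ℝ)
    (hξ₁ : ξ₁ = (cexpE P (fun ω => ε ω * D ω) {ω | Z ω = 1} -
        cexpE P (fun ω => ε ω * D ω) {ω | Z ω = 0}) / (p 1 - p 0))
    (hξ₂ : ξ₂ = (cexpE P (fun ω => (ε ω) ^ 2 * D ω) {ω | Z ω = 1} -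
        cexpE P (fun ω => (ε ω) ^ 2 * D ω) {ω | Z ω = 0}) / (p 1 - p 0))
    (hint : ∀ z ∈ ({0, 1} : Set ℝ),
      Integrable ε (P.restrict {ω | Z ω = z}) ∧
      Integrable D (P.restrict {ω | Z ω = z}) ∧
      Integrable (fun ω => ε ω * D ω) (P.restrict {ω | Z ω = z}) ∧
      Integrable (fun ω => (ε ω) ^ 2 * D ω) (P.restrict {ω | Z ω = z}) ∧
      Integrable Y (P.restrict {ω | Z ω = z}) ∧
      Integrable (fun ω => (Y ω) ^ 2) (P.restrict {ω | Z ω = z}))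
    (r0 r1 : ℝ)
    (hr1 : r1 = μf 1 - μf 0 + (σf 1 - σf 0) * ξ₁)
    (hr0 : r0 = μf 0 - (σf 1 - σf 0) *
      (cexpE P (fun ω => ε ω * D ω) {ω | Z ω = 1} * p 0 -
       cexpE P (fun ω => ε ω * D ω) {ω | Z ω = 0} * p 1) / (p 1 - p 0)) :
    (cexpE P (fun ω => (Y ω - r0 - r1 * D ω) ^ 2) {ω | Z ω = 1} -
      cexpE P (fun ω => (Y ω - r0 - r1 * D ω) ^ 2) {ω | Z ω = 0}) / (p 1 - p 0) =
    ((σf 1) ^ 2 - (σf 0) ^ 2) * (ξ₂ - ξ₁ ^ 2) := by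
  have key : ∀ z ∈ ({0, 1} : Set ℝ),
      cexpE P (fun ω => (Y ω - r0 - r1 * D ω) ^ 2) {ω | Z ω = z}
        = (μf 0 - r0) ^ 2 + (σf 0) ^ 2
          + ((μf 1 - μf 0 - r1) ^ 2 + 2 * (μf 0 - r0) * (μf 1 - μf 0 - r1)) * p z
          + (2 * (μf 0 - r0) * (σf 1 - σf 0) + 2 * (μf 1 - μf 0 - r1) * (σf 0)
              + 2 * (μf 1 - μf 0 - r1) * (σf 1 - σf 0)) *
            cexpE P (fun ω => ε ω * D ω) {ω | Z ω = z}
          + ((σf 1 - σf 0) ^ 2 + 2 * (σf 0) * (σf 1 - σf 0)) *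
            cexpE P (fun ω => (ε ω) ^ 2 * D ω) {ω | Z ω = z} := by
    intro z hz
    obtain ⟨hiε, hiD, hiεD, hiε2D, hiY, hiY2⟩ := hint z hz
    set A := {ω | Z ω = z} with hA
    have hm : (P A).toReal ≠ 0 := by
      have h1 := (hPz z hz).ne'
      simp [ENNReal.toReal_ne_zero, h1, (measure_lt_top P A).ne]
      exact h1
    have hiε2 : Integrable (fun ω => (ε ω) ^ 2) (P.restrict A) := by
      by_contra h
      have h2 := hε2 z hz
      rw [cexpE, integral_undef h] at h2
      simp [hm] at h2
    have hpt : (fun ω => (Y ω - r0 - r1 * D ω) ^ 2)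
        = fun ω => (μf 0 - r0) ^ 2 + (σf 0) ^ 2 * (ε ω) ^ 2
          + ((μf 1 - μf 0 - r1) ^ 2 + 2 * (μf 0 - r0) * (μf 1 - μf 0 - r1)) * D ω
          + (2 * (μf 0 - r0) * (σf 0)) * ε ω
          + (2 * (μf 0 - r0) * (σf 1 - σf 0) + 2 * (μf 1 - μf 0 - r1) * (σf 0)
              + 2 * (μf 1 - μf 0 - r1) * (σf 1 - σf 0)) * (ε ω * D ω)
          + ((σf 1 - σf 0) ^ 2 + 2 * (σf 0) * (σf 1 - σf 0)) * ((ε ω) ^ 2 * D ω) := by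
      funext ω
      rcases hD ω with h | h <;> (rw [hY ω, h]; ring)
    have I2 : Integrable (fun ω => (μf 0 - r0) ^ 2 + (σf 0) ^ 2 * (ε ω) ^ 2)
        (P.restrict A) := (integrable_const _).add (hiε2.const_mul _)
    have I3 : Integrable (fun ω => (μf 0 - r0) ^ 2 + (σf 0) ^ 2 * (ε ω) ^ 2
        + ((μf 1 - μf 0 - r1) ^ 2 + 2 * (μf 0 - r0) * (μf 1 - μf 0 - r1)) * D ω)
        (P.restrict A) := I2.add (hiD.const_mul _)
    have I4 : Integrable (fun ω => (μf 0 - r0) ^ 2 + (σf 0) ^ 2 * (ε ω) ^ 2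
        + ((μf 1 - μf 0 - r1) ^ 2 + 2 * (μf 0 - r0) * (μf 1 - μf 0 - r1)) * D ω
        + (2 * (μf 0 - r0) * (σf 0)) * ε ω)
        (P.restrict A) := I3.add (hiε.const_mul _)
    have I5 : Integrable (fun ω => (μf 0 - r0) ^ 2 + (σf 0) ^ 2 * (ε ω) ^ 2
        + ((μf 1 - μf 0 - r1) ^ 2 + 2 * (μf 0 - r0) * (μf 1 - μf 0 - r1)) * D ω
        + (2 * (μf 0 - r0) * (σf 0)) * ε ω
        + (2 * (μf 0 - r0) * (σf 1 - σf 0) + 2 * (μf 1 - μf 0 - r1) * (σf 0)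
            + 2 * (μf 1 - μf 0 - r1) * (σf 1 - σf 0)) * (ε ω * D ω))
        (P.restrict A) := I4.add (hiεD.const_mul _)
    have hE1 : (∫ ω in A, ε ω ∂P) = 0 := by
      have h := hε1 z hz
      rw [cexpE] at h
      rw [div_eq_iff hm, zero_mul] at h
      exact h
    have hE2 : (∫ ω in A, (ε ω) ^ 2 ∂P) = (P A).toReal := by
      have h := hε2 z hz
      rw [cexpE] at h
      rw [div_eq_iff hm, one_mul] at h
      exact h
    have hpD : (∫ ω in A, D ω ∂P) = p z * (P A).toReal := by
      have h := (hp z hz).symm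
      rw [cexpE] at h
      rw [div_eq_iff hm] at h
      exact h
    simp only [cexpE]
    rw [show (∫ ω in A, (Y ω - r0 - r1 * D ω) ^ 2 ∂P)
          = ∫ ω in A, ((μf 0 - r0) ^ 2 + (σf 0) ^ 2 * (ε ω) ^ 2
            + ((μf 1 - μf 0 - r1) ^ 2 + 2 * (μf 0 - r0) * (μf 1 - μf 0 - r1)) * D ω
            + (2 * (μf 0 - r0) * (σf 0)) * ε ω
            + (2 * (μf 0 - r0) * (σf 1 - σf 0) + 2 * (μf 1 - μf 0 - r1) * (σf 0)
                + 2 * (μf 1 - μf 0 - r1) * (σf 1 - σf 0)) * (ε ω * D ω)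
            + ((σf 1 - σf 0) ^ 2 + 2 * (σf 0) * (σf 1 - σf 0)) * ((ε ω) ^ 2 * D ω)) ∂P
          from by rw [← hpt]]
    rw [integral_add I5 (hiε2D.const_mul _),
        integral_add I4 (hiεD.const_mul _),
        integral_add I3 (hiε.const_mul _),
        integral_add I2 (hiD.const_mul _),
        integral_add (integrable_const _) (hiε2.const_mul _),
        integral_const_mul, integral_const_mul, integral_const_mul,
        integral_const_mul, integral_const_mul,
        integral_const, hE1, hE2, hpD]
    simp only [Measure.real, Measure.restrict_apply_univ, smul_eq_mul]
    field_simp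
    ring
  have h1 := key 1 (by simp)
  have h0 := key 0 (by simp)
  have hrel' : p 1 - p 0 ≠ 0 := sub_ne_zero.mpr hrel
  rw [h1, h0, hr1, hr0, hξ₂, hξ₁]
  field_simp
  ring
end

section
/- (Conditional variance of potential outcome for compliers) Under the same monotone selection setup, V_d := (E[Y²·1(D=d)|Z=1] − E[Y²·1(D=d)|Z=0])/(P(D=d|Z=1) − P(D=d|Z=0)) − δ_d² equals Var(Y_d | m(0) < η ≤ m(1)) for d = 0,1. -/
open MeasureTheory ProbabilityTheory


open MeasureTheory ProbabilityTheory

section helpers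
variable {Ω : Type*} [MeasurableSpace Ω] {P : Measure Ω} [IsProbabilityMeasure P]

lemma my_indep_setIntegral {W : Ω → ℝ × ℝ × ℝ} {Z : Ω → ℝ}
    (hW : Measurable W) (hZm : Measurable Z)
    (hindep : IndepFun W Z P) {g : ℝ × ℝ × ℝ → ℝ} (hg : Measurable g) (z : ℝ) :
    ∫ ω in {ω | Z ω = z}, g (W ω) ∂P = (P {ω | Z ω = z}).toReal * ∫ ω, g (W ω) ∂P := by
  have hset : MeasurableSet {ω | Z ω = z} := hZm (measurableSet_singleton z)
  have hh : Measurable (fun x : ℝ => if x = z then (1:ℝ) else 0) :=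
    Measurable.ite (measurableSet_eq) measurable_const measurable_const
  have hind : IndepFun (g ∘ W) ((fun x : ℝ => if x = z then (1:ℝ) else 0) ∘ Z) P :=
    hindep.comp hg hh
  have hmul := hind.integral_fun_mul_eq_mul_integral ((hg.comp hW).aestronglyMeasurable)
    ((hh.comp hZm).aestronglyMeasurable)
  have h1 : (∫ ω, (if Z ω = z then (1:ℝ) else 0) ∂P) = (P {ω | Z ω = z}).toReal := by
    have e : (fun ω => if Z ω = z then (1:ℝ) else 0)
        = Set.indicator {ω | Z ω = z} (fun _ => (1:ℝ)) := by
      ext ω; simp [Set.indicator_apply, Set.mem_setOf_eq]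
    rw [e, integral_indicator_const (1:ℝ) hset, smul_eq_mul, mul_one, measureReal_def]
  calc ∫ ω in {ω | Z ω = z}, g (W ω) ∂P
      = ∫ ω, Set.indicator {ω | Z ω = z} (fun ω => g (W ω)) ω ∂P :=
        (integral_indicator hset).symm
    _ = ∫ ω, (g ∘ W) ω * ((fun x : ℝ => if x = z then (1:ℝ) else 0) ∘ Z) ω ∂P := by
        congr 1; ext ω
        by_cases h : Z ω = z <;> simp [Set.indicator_apply, Set.mem_setOf_eq, h]
    _ = (∫ ω, g (W ω) ∂P) * ∫ ω, (if Z ω = z then (1:ℝ) else 0) ∂P := hmul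
    _ = (P {ω | Z ω = z}).toReal * ∫ ω, g (W ω) ∂P := by rw [h1, mul_comm]

lemma my_diff_eq {η : Ω → ℝ} (hη : Measurable η) {c0 c1 : ℝ} (hc : c0 < c1)
    (f : Ω → ℝ) (hf : Integrable f P) :
    (∫ ω, f ω * (if η ω ≤ c1 then 1 else 0) ∂P)
      - (∫ ω, f ω * (if η ω ≤ c0 then 1 else 0) ∂P)
      = ∫ ω in {ω | c0 < η ω ∧ η ω ≤ c1}, f ω ∂P := by
  have hS : ∀ c : ℝ, MeasurableSet {ω | η ω ≤ c} := fun c => measurableSet_le hη measurable_const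
  have hC : MeasurableSet {ω | c0 < η ω ∧ η ω ≤ c1} :=
    (measurableSet_lt measurable_const hη).inter (hS c1)
  have e : ∀ c : ℝ, (fun ω => f ω * (if η ω ≤ c then 1 else 0))
      = Set.indicator {ω | η ω ≤ c} f := by
    intro c; ext ω; by_cases h : η ω ≤ c <;> simp [Set.indicator_apply, Set.mem_setOf_eq, h]
  rw [e c1, e c0, ← integral_sub (hf.indicator (hS c1)) (hf.indicator (hS c0)),
    ← integral_indicator hC]
  congr 1; ext ω
  by_cases h0 : η ω ≤ c0
  · have h1 : η ω ≤ c1 := h0.trans hc.le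
    simp [Set.indicator_apply, Set.mem_setOf_eq, h0, h1, not_lt.2 h0]
  · by_cases h1 : η ω ≤ c1 <;>
      simp [Set.indicator_apply, Set.mem_setOf_eq, h0, h1, not_le.1 h0]

lemma my_diff_eq' {η : Ω → ℝ} (hη : Measurable η) {c0 c1 : ℝ} (hc : c0 < c1)
    (f : Ω → ℝ) (hf : Integrable f P) :
    (∫ ω, f ω * (if η ω ≤ c1 then 0 else 1) ∂P)
      - (∫ ω, f ω * (if η ω ≤ c0 then 0 else 1) ∂P)
      = - ∫ ω in {ω | c0 < η ω ∧ η ω ≤ c1}, f ω ∂P := by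
  have hS : ∀ c : ℝ, MeasurableSet {ω | ¬ η ω ≤ c} :=
    fun c => (measurableSet_le hη measurable_const).compl
  have hC : MeasurableSet {ω | c0 < η ω ∧ η ω ≤ c1} :=
    (measurableSet_lt measurable_const hη).inter (measurableSet_le hη measurable_const)
  have e : ∀ c : ℝ, (fun ω => f ω * (if η ω ≤ c then 0 else 1))
      = Set.indicator {ω | ¬ η ω ≤ c} f := by
    intro c; ext ω; by_cases h : η ω ≤ c
    · simp [Set.indicator_apply, Set.mem_setOf_eq, h, not_le]
    · simp [Set.indicator_apply, Set.mem_setOf_eq, h, not_le, not_le.1 h]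
  rw [e c1, e c0, ← integral_sub (hf.indicator (hS c1)) (hf.indicator (hS c0)),
    ← integral_indicator hC, ← integral_neg]
  congr 1; ext ω
  by_cases h0 : η ω ≤ c0
  · have h1 : η ω ≤ c1 := h0.trans hc.le
    simp [Set.indicator_apply, Set.mem_setOf_eq, h0, h1, not_lt.2 h0, not_le]
  · by_cases h1 : η ω ≤ c1
    · simp [Set.indicator_apply, Set.mem_setOf_eq, h0, h1, not_le.1 h0, not_le]
    · simp [Set.indicator_apply, Set.mem_setOf_eq, h0, h1, not_le.1 h0, not_le.1 h1, not_le]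

end helpers

theorem stmt18 {Ω : Type*} [MeasurableSpace Ω] (P : Measure Ω) [IsProbabilityMeasure P]
    (Y0 Y1 η Z D Y : Ω → ℝ) (m : ℝ → ℝ)
    (hm : m 0 < m 1) (hZ : ∀ ω, Z ω = 0 ∨ Z ω = 1)
    (hZmeas : Measurable Z) (hmeas : Measurable fun ω => (Y0 ω, Y1 ω, η ω))
    (hindep : ProbabilityTheory.IndepFun (fun ω => (Y0 ω, Y1 ω, η ω)) Z P)
    (hPZ : 0 < P {ω | Z ω = 1} ∧ P {ω | Z ω = 1} < 1)
    (hDdef : ∀ ω, D ω = if η ω ≤ m (Z ω) then 1 else 0)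
    (hYdef : ∀ ω, Y ω = D ω * Y1 ω + (1 - D ω) * Y0 ω)
    (hCpl : 0 < P {ω | m 0 < η ω ∧ η ω ≤ m 1})
    (hint : Integrable Y0 P ∧ Integrable Y1 P ∧
      Integrable (fun ω => (Y0 ω) ^ 2) P ∧ Integrable (fun ω => (Y1 ω) ^ 2) P)
    (δ V : ℝ → ℝ)
    (hδ : ∀ d ∈ ({0, 1} : Set ℝ),
      δ d = (cexpE P (fun ω => Y ω * (if D ω = d then 1 else 0)) {ω | Z ω = 1} -
          cexpE P (fun ω => Y ω * (if D ω = d then 1 else 0)) {ω | Z ω = 0}) /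
        (cexpE P (fun ω => if D ω = d then 1 else 0) {ω | Z ω = 1} -
          cexpE P (fun ω => if D ω = d then 1 else 0) {ω | Z ω = 0}))
    (hV : ∀ d ∈ ({0, 1} : Set ℝ),
      V d = (cexpE P (fun ω => (Y ω) ^ 2 * (if D ω = d then 1 else 0)) {ω | Z ω = 1} -
          cexpE P (fun ω => (Y ω) ^ 2 * (if D ω = d then 1 else 0)) {ω | Z ω = 0}) /
        (cexpE P (fun ω => if D ω = d then 1 else 0) {ω | Z ω = 1} -
          cexpE P (fun ω => if D ω = d then 1 else 0) {ω | Z ω = 0}) - (δ d) ^ 2) :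
    V 1 = cexpE P (fun ω => (Y1 ω) ^ 2) {ω | m 0 < η ω ∧ η ω ≤ m 1} -
        (cexpE P Y1 {ω | m 0 < η ω ∧ η ω ≤ m 1}) ^ 2 ∧
    V 0 = cexpE P (fun ω => (Y0 ω) ^ 2) {ω | m 0 < η ω ∧ η ω ≤ m 1} -
        (cexpE P Y0 {ω | m 0 < η ω ∧ η ω ≤ m 1}) ^ 2 := by

  classical
  set W : Ω → ℝ × ℝ × ℝ := fun ω => (Y0 ω, Y1 ω, η ω) with hW
  have hWm : Measurable W := hmeas
  have hη : Measurable η := (measurable_snd.comp measurable_snd).comp hmeas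
  have hset1 : MeasurableSet {ω | Z ω = 1} := hZmeas (measurableSet_singleton 1)
  have hPZ1 : P {ω | Z ω = 1} ≠ 0 := hPZ.1.ne'
  have hPZ0 : P {ω | Z ω = 0} ≠ 0 := by
    intro h
    have hsub : {ω | Z ω = 1}ᶜ ⊆ {ω | Z ω = 0} := fun ω hω => (hZ ω).resolve_right hω
    have hc : P {ω | Z ω = 1}ᶜ = 0 :=
      le_antisymm (h ▸ measure_mono hsub) zero_le
    rw [prob_compl_eq_one_sub hset1] at hc
    exact absurd (tsub_eq_zero_iff_le.mp hc) (not_le.mpr hPZ.2)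
  -- main reduction: conditional expectation given Z = z of a function of W
  have main : ∀ (z : ℝ), P {ω | Z ω = z} ≠ 0 → ∀ (f : Ω → ℝ) (g : ℝ × ℝ × ℝ → ℝ),
      Measurable g → (∀ ω, Z ω = z → f ω = g (W ω)) →
      cexpE P f {ω | Z ω = z} = ∫ ω, g (W ω) ∂P := by
    intro z hz f g hg heq
    have hset : MeasurableSet {ω | Z ω = z} := hZmeas (measurableSet_singleton z)
    have h1 : ∫ ω in {ω | Z ω = z}, f ω ∂P = ∫ ω in {ω | Z ω = z}, g (W ω) ∂P :=
      setIntegral_congr_fun hset (fun ω hω => heq ω hω)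
    have h2 := my_indep_setIntegral hWm hZmeas hindep hg z
    have htr : (P {ω | Z ω = z}).toReal ≠ 0 :=
      ENNReal.toReal_ne_zero.mpr ⟨hz, measure_ne_top _ _⟩
    rw [cexpE, h1, h2, mul_comm, mul_div_assoc, div_self htr, mul_one]
  -- the complier set
  set C : Set Ω := {ω | m 0 < η ω ∧ η ω ≤ m 1} with hCdef
  have hPC : (P C).toReal ≠ 0 :=
    ENNReal.toReal_ne_zero.mpr ⟨hCpl.ne', measure_ne_top _ _⟩
  have hmeasle : ∀ c : ℝ, MeasurableSet {p : ℝ × ℝ × ℝ | p.2.2 ≤ c} :=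
    fun c => measurableSet_le (measurable_snd.comp measurable_snd) measurable_const
  -- measurable g's
  have hg1 : ∀ c : ℝ, Measurable (fun p : ℝ × ℝ × ℝ => p.2.1 * (if p.2.2 ≤ c then (1:ℝ) else 0)) :=
    fun c => (measurable_fst.comp measurable_snd).mul
      (Measurable.ite (hmeasle c) measurable_const measurable_const)
  have hg1sq : ∀ c : ℝ, Measurable (fun p : ℝ × ℝ × ℝ => p.2.1 ^ 2 * (if p.2.2 ≤ c then (1:ℝ) else 0)) :=
    fun c => ((measurable_fst.comp measurable_snd).pow_const 2).mul
      (Measurable.ite (hmeasle c) measurable_const measurable_const)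
  have hg0 : ∀ c : ℝ, Measurable (fun p : ℝ × ℝ × ℝ => p.1 * (if p.2.2 ≤ c then (0:ℝ) else 1)) :=
    fun c => measurable_fst.mul
      (Measurable.ite (hmeasle c) measurable_const measurable_const)
  have hg0sq : ∀ c : ℝ, Measurable (fun p : ℝ × ℝ × ℝ => p.1 ^ 2 * (if p.2.2 ≤ c then (0:ℝ) else 1)) :=
    fun c => (measurable_fst.pow_const 2).mul
      (Measurable.ite (hmeasle c) measurable_const measurable_const)
  have hgd1 : ∀ c : ℝ, Measurable (fun p : ℝ × ℝ × ℝ => (1:ℝ) * (if p.2.2 ≤ c then (1:ℝ) else 0)) :=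
    fun c => measurable_const.mul
      (Measurable.ite (hmeasle c) measurable_const measurable_const)
  have hgd0 : ∀ c : ℝ, Measurable (fun p : ℝ × ℝ × ℝ => (1:ℝ) * (if p.2.2 ≤ c then (0:ℝ) else 1)) :=
    fun c => measurable_const.mul
      (Measurable.ite (hmeasle c) measurable_const measurable_const)
  -- numerator and denominator identities, d = 1
  have e_num1 : cexpE P (fun ω => Y ω * (if D ω = 1 then 1 else 0)) {ω | Z ω = 1} -
      cexpE P (fun ω => Y ω * (if D ω = 1 then 1 else 0)) {ω | Z ω = 0}
      = ∫ ω in C, Y1 ω ∂P := by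
    rw [main 1 hPZ1 _ (fun p => p.2.1 * (if p.2.2 ≤ m 1 then (1:ℝ) else 0)) (hg1 (m 1))
        (by intro ω hω; by_cases h : η ω ≤ m 1 <;> simp [hW, hDdef, hYdef, hω, h]),
      main 0 hPZ0 _ (fun p => p.2.1 * (if p.2.2 ≤ m 0 then (1:ℝ) else 0)) (hg1 (m 0))
        (by intro ω hω; by_cases h : η ω ≤ m 0 <;> simp [hW, hDdef, hYdef, hω, h])]
    exact my_diff_eq hη hm Y1 hint.2.1
  have e_num1sq : cexpE P (fun ω => (Y ω) ^ 2 * (if D ω = 1 then 1 else 0)) {ω | Z ω = 1} -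
      cexpE P (fun ω => (Y ω) ^ 2 * (if D ω = 1 then 1 else 0)) {ω | Z ω = 0}
      = ∫ ω in C, (Y1 ω) ^ 2 ∂P := by
    rw [main 1 hPZ1 _ (fun p => p.2.1 ^ 2 * (if p.2.2 ≤ m 1 then (1:ℝ) else 0)) (hg1sq (m 1))
        (by intro ω hω; by_cases h : η ω ≤ m 1 <;> simp [hW, hDdef, hYdef, hω, h]),
      main 0 hPZ0 _ (fun p => p.2.1 ^ 2 * (if p.2.2 ≤ m 0 then (1:ℝ) else 0)) (hg1sq (m 0))
        (by intro ω hω; by_cases h : η ω ≤ m 0 <;> simp [hW, hDdef, hYdef, hω, h])]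
    exact my_diff_eq hη hm (fun ω => (Y1 ω) ^ 2) hint.2.2.2
  have e_den1 : cexpE P (fun ω => if D ω = 1 then (1:ℝ) else 0) {ω | Z ω = 1} -
      cexpE P (fun ω => if D ω = 1 then (1:ℝ) else 0) {ω | Z ω = 0}
      = (P C).toReal := by
    rw [main 1 hPZ1 _ (fun p => (1:ℝ) * (if p.2.2 ≤ m 1 then (1:ℝ) else 0)) (hgd1 (m 1))
        (by intro ω hω; by_cases h : η ω ≤ m 1 <;> simp [hW, hDdef, hω, h]),
      main 0 hPZ0 _ (fun p => (1:ℝ) * (if p.2.2 ≤ m 0 then (1:ℝ) else 0)) (hgd1 (m 0))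
        (by intro ω hω; by_cases h : η ω ≤ m 0 <;> simp [hW, hDdef, hω, h]),
      my_diff_eq hη hm (fun _ => (1:ℝ)) (integrable_const 1)]
    simp [measureReal_def, hCdef]
  -- numerator and denominator identities, d = 0
  have e_num0 : cexpE P (fun ω => Y ω * (if D ω = 0 then 1 else 0)) {ω | Z ω = 1} -
      cexpE P (fun ω => Y ω * (if D ω = 0 then 1 else 0)) {ω | Z ω = 0}
      = - ∫ ω in C, Y0 ω ∂P := by
    rw [main 1 hPZ1 _ (fun p => p.1 * (if p.2.2 ≤ m 1 then (0:ℝ) else 1)) (hg0 (m 1))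
        (by intro ω hω; by_cases h : η ω ≤ m 1 <;> simp [hW, hDdef, hYdef, hω, h]),
      main 0 hPZ0 _ (fun p => p.1 * (if p.2.2 ≤ m 0 then (0:ℝ) else 1)) (hg0 (m 0))
        (by intro ω hω; by_cases h : η ω ≤ m 0 <;> simp [hW, hDdef, hYdef, hω, h])]
    exact my_diff_eq' hη hm Y0 hint.1
  have e_num0sq : cexpE P (fun ω => (Y ω) ^ 2 * (if D ω = 0 then 1 else 0)) {ω | Z ω = 1} -
      cexpE P (fun ω => (Y ω) ^ 2 * (if D ω = 0 then 1 else 0)) {ω | Z ω = 0}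
      = - ∫ ω in C, (Y0 ω) ^ 2 ∂P := by
    rw [main 1 hPZ1 _ (fun p => p.1 ^ 2 * (if p.2.2 ≤ m 1 then (0:ℝ) else 1)) (hg0sq (m 1))
        (by intro ω hω; by_cases h : η ω ≤ m 1 <;> simp [hW, hDdef, hYdef, hω, h]),
      main 0 hPZ0 _ (fun p => p.1 ^ 2 * (if p.2.2 ≤ m 0 then (0:ℝ) else 1)) (hg0sq (m 0))
        (by intro ω hω; by_cases h : η ω ≤ m 0 <;> simp [hW, hDdef, hYdef, hω, h])]
    exact my_diff_eq' hη hm (fun ω => (Y0 ω) ^ 2) hint.2.2.1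
  have e_den0 : cexpE P (fun ω => if D ω = 0 then (1:ℝ) else 0) {ω | Z ω = 1} -
      cexpE P (fun ω => if D ω = 0 then (1:ℝ) else 0) {ω | Z ω = 0}
      = - (P C).toReal := by
    rw [main 1 hPZ1 _ (fun p => (1:ℝ) * (if p.2.2 ≤ m 1 then (0:ℝ) else 1)) (hgd0 (m 1))
        (by intro ω hω; by_cases h : η ω ≤ m 1 <;> simp [hW, hDdef, hω, h]),
      main 0 hPZ0 _ (fun p => (1:ℝ) * (if p.2.2 ≤ m 0 then (0:ℝ) else 1)) (hgd0 (m 0))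
        (by intro ω hω; by_cases h : η ω ≤ m 0 <;> simp [hW, hDdef, hω, h]),
      my_diff_eq' hη hm (fun _ => (1:ℝ)) (integrable_const 1)]
    simp [measureReal_def, hCdef]
  have h1mem : (1:ℝ) ∈ ({0, 1} : Set ℝ) := by simp
  have h0mem : (0:ℝ) ∈ ({0, 1} : Set ℝ) := by simp
  have hδ1 : δ 1 = cexpE P Y1 C := by
    rw [hδ 1 h1mem, e_num1, e_den1, cexpE]
  have hδ0 : δ 0 = cexpE P Y0 C := by
    rw [hδ 0 h0mem, e_num0, e_den0, neg_div_neg_eq, cexpE]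
  constructor
  · rw [hV 1 h1mem, e_num1sq, e_den1, hδ1, cexpE]; rfl
  · rw [hV 0 h0mem, e_num0sq, e_den0, neg_div_neg_eq, hδ0, cexpE]; rfl
end

section
/- (Uncorrelatedness of the standardized residual statistic with Z) Under the key identification lemma assumptions with C ≠ 0, define Ψ = D(Y − δ₁)²/V₁ + (1−D)(Y − δ₀)²/V₀. Then Ψ = (ε − ξ₁)²/C, and consequently Cov(Ψ, Z) satisfies E[Ψ|Z=1] = E[Ψ|Z=0], i.e., Cov(Ψ, Z) = 0. -/
open MeasureTheory

lemma aux_int {Ω : Type*} [MeasurableSpace Ω] (P : Measure Ω) [IsProbabilityMeasure P]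
    (ε Ψ : Ω → ℝ) (ξ₁ C : ℝ) (hCne : C ≠ 0) (s : Set Ω) (hs : 0 < P s)
    (hε1 : cexpE P ε s = 0) (hε2 : cexpE P (fun ω => (ε ω) ^ 2) s = 1)
    (h1 : Integrable ε (P.restrict s)) (h2 : Integrable (fun ω => (ε ω) ^ 2) (P.restrict s))
    (hΨ : ∀ ω, Ψ ω = (ε ω - ξ₁) ^ 2 / C) :
    (∫ ω in s, Ψ ω ∂P) = (1 + ξ₁ ^ 2) / C * (P s).toReal ∧
    cexpE P Ψ s = (1 + ξ₁ ^ 2) / C := by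
  have hsfin : P s ≠ ⊤ := measure_ne_top P s
  have hpt : (0:ℝ) < (P s).toReal := ENNReal.toReal_pos hs.ne' hsfin
  have hIε : (∫ ω in s, ε ω ∂P) = 0 := by
    have := hε1
    unfold cexpE at this
    field_simp at this
    simpa using this
  have hIε2 : (∫ ω in s, (ε ω) ^ 2 ∂P) = (P s).toReal := by
    have := hε2
    unfold cexpE at this
    rw [div_eq_one_iff_eq hpt.ne'] at this
    exact this
  have hΨeq : ∀ ω, Ψ ω = (1/C) * ((ε ω) ^ 2) + ((-2*ξ₁/C) * ε ω + ξ₁^2/C) := by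
    intro ω
    rw [hΨ ω]
    field_simp
    ring
  have hint2 : Integrable (fun ω => (-2*ξ₁/C) * ε ω + ξ₁^2/C) (P.restrict s) :=
    (h1.const_mul _).add (integrable_const _)
  have hI : (∫ ω in s, Ψ ω ∂P) =
      (∫ ω in s, (1/C) * ((ε ω) ^ 2) ∂P) +
      (∫ ω in s, ((-2*ξ₁/C) * ε ω + ξ₁^2/C) ∂P) := by
    rw [← integral_add (h2.const_mul _) hint2]
    exact integral_congr_ae (Filter.Eventually.of_forall fun ω => hΨeq ω)
  have hI2 : (∫ ω in s, ((-2*ξ₁/C) * ε ω + ξ₁^2/C) ∂P) =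
      (-2*ξ₁/C) * (∫ ω in s, ε ω ∂P) + (ξ₁^2/C) * (P s).toReal := by
    rw [integral_add (h1.const_mul _) (integrable_const _), integral_const_mul,
      integral_const]
    simp [Measure.restrict_apply_univ, smul_eq_mul, mul_comm]
    exact Or.inl rfl
  have hmain : (∫ ω in s, Ψ ω ∂P) = (1 + ξ₁ ^ 2) / C * (P s).toReal := by
    rw [hI, hI2, integral_const_mul, hIε, hIε2]
    ring
  refine ⟨hmain, ?_⟩
  unfold cexpE
  rw [hmain]
  field_simp

theorem stmt19 {Ω : Type*} [MeasurableSpace Ω] (P : Measure Ω) [IsProbabilityMeasure P]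
    (D Z ε Y Ψ : Ω → ℝ) (μf σf : ℝ → ℝ) (ξ₁ ξ₂ C δ0 δ1 V0 V1 : ℝ)
    (hD : ∀ ω, D ω = 0 ∨ D ω = 1) (hZ : ∀ ω, Z ω = 0 ∨ Z ω = 1)
    (hPz : ∀ z ∈ ({0, 1} : Set ℝ), 0 < P {ω | Z ω = z})
    (hσ0 : 0 < σf 0) (hσ1 : 0 < σf 1)
    (hY : ∀ ω, Y ω = μf (D ω) + σf (D ω) * ε ω)
    (hε1 : ∀ z ∈ ({0, 1} : Set ℝ), cexpE P ε {ω | Z ω = z} = 0)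
    (hε2 : ∀ z ∈ ({0, 1} : Set ℝ), cexpE P (fun ω => (ε ω) ^ 2) {ω | Z ω = z} = 1)
    (p : ℝ → ℝ) (hp : ∀ z ∈ ({0, 1} : Set ℝ), p z = cexpE P D {ω | Z ω = z})
    (hrel : p 1 ≠ p 0)
    (hξ₁ : ξ₁ = (cexpE P (fun ω => ε ω * D ω) {ω | Z ω = 1} -
        cexpE P (fun ω => ε ω * D ω) {ω | Z ω = 0}) / (p 1 - p 0))
    (hξ₂ : ξ₂ = (cexpE P (fun ω => (ε ω) ^ 2 * D ω) {ω | Z ω = 1} -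
        cexpE P (fun ω => (ε ω) ^ 2 * D ω) {ω | Z ω = 0}) / (p 1 - p 0))
    (hC : C = ξ₂ - ξ₁ ^ 2) (hCne : C ≠ 0)
    (hδ0 : δ0 = μf 0 + σf 0 * ξ₁) (hδ1 : δ1 = μf 1 + σf 1 * ξ₁)
    (hV0 : V0 = (σf 0) ^ 2 * C) (hV1 : V1 = (σf 1) ^ 2 * C)
    (hΨ : ∀ ω, Ψ ω = D ω * (Y ω - δ1) ^ 2 / V1 + (1 - D ω) * (Y ω - δ0) ^ 2 / V0)
    (hint : ∀ z ∈ ({0, 1} : Set ℝ),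
      Integrable ε (P.restrict {ω | Z ω = z}) ∧
      Integrable (fun ω => (ε ω) ^ 2) (P.restrict {ω | Z ω = z}) ∧
      Integrable Ψ (P.restrict {ω | Z ω = z}))
    (hintΨ : Integrable Ψ P) (hintΨZ : Integrable (fun ω => Ψ ω * Z ω) P)
    (hintZ : Integrable Z P) :
    (∀ ω, Ψ ω = (ε ω - ξ₁) ^ 2 / C) ∧
    cexpE P Ψ {ω | Z ω = 1} = cexpE P Ψ {ω | Z ω = 0} ∧
    covE P Ψ Z = 0 := by
  have h0 : (0:ℝ) ∈ ({0, 1} : Set ℝ) := by simp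
  have h1 : (1:ℝ) ∈ ({0, 1} : Set ℝ) := by simp
  -- Part 1: pointwise identity
  have hpt : ∀ ω, Ψ ω = (ε ω - ξ₁) ^ 2 / C := by
    intro ω
    rcases hD ω with hd | hd <;>
      rw [hΨ ω, hY ω, hd, hδ0, hδ1, hV0, hV1] <;>
      · field_simp
        ring
  set s1 : Set Ω := {ω | Z ω = 1} with hs1def
  set s0 : Set Ω := {ω | Z ω = 0} with hs0def
  have hs0c : s0 = s1ᶜ := by
    ext ω
    rcases hZ ω with h | h <;> simp [hs0def, hs1def, h]
  -- Conditional means via aux lemma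
  have haux1 := aux_int P ε Ψ ξ₁ C hCne s1 (hPz 1 h1) (hε1 1 h1) (hε2 1 h1)
    (hint 1 h1).1 (hint 1 h1).2.1 hpt
  have haux0 := aux_int P ε Ψ ξ₁ C hCne s0 (hPz 0 h0) (hε1 0 h0) (hε2 0 h0)
    (hint 0 h0).1 (hint 0 h0).2.1 hpt
  refine ⟨hpt, by rw [haux1.2, haux0.2], ?_⟩
  -- Part 3: covariance
  have hZm : AEStronglyMeasurable Z P := hintZ.1
  set Z' := hZm.mk Z with hZ'def
  have hZae : Z =ᵐ[P] Z' := hZm.ae_eq_mk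
  set t : Set Ω := {ω | Z' ω = 1} with htdef
  have ht : MeasurableSet t := hZm.measurable_mk (measurableSet_singleton 1)
  have hst : s1 =ᵐ[P] t := by
    rw [Filter.eventuallyEq_set]
    filter_upwards [hZae] with ω hω
    simp [hs1def, htdef, hω]
  have hstc : s0 =ᵐ[P] (tᶜ : Set Ω) := by
    rw [hs0c]
    exact hst.compl
  -- integral of Ψ*Z
  have hPsZ : (∫ ω, Ψ ω * Z ω ∂P) = ∫ ω in t, Ψ ω ∂P := by
    have e1 : (fun ω => Ψ ω * Z ω) =ᵐ[P] t.indicator Ψ := by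
      filter_upwards [hZae] with ω hω
      rcases hZ ω with h | h <;>
        simp [Set.indicator, htdef, ← hω, h]
    rw [integral_congr_ae e1, integral_indicator ht]
  -- integral of Z
  have hPZ : (∫ ω, Z ω ∂P) = (P t).toReal := by
    have e1 : Z =ᵐ[P] t.indicator (fun _ => (1:ℝ)) := by
      filter_upwards [hZae] with ω hω
      rcases hZ ω with h | h <;>
        simp [Set.indicator, htdef, ← hω, h]
    rw [integral_congr_ae e1, integral_indicator_const _ ht]
    simp
    rfl
  -- integral of Ψ splits
  have hsplit : (∫ ω in t, Ψ ω ∂P) + (∫ ω in tᶜ, Ψ ω ∂P) = ∫ ω, Ψ ω ∂P :=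
    integral_add_compl ht hintΨ
  have hrt : (∫ ω in t, Ψ ω ∂P) = (1 + ξ₁ ^ 2) / C * (P t).toReal := by
    rw [← Measure.restrict_congr_set hst, haux1.1, measure_congr hst]
  have hrtc : (∫ ω in tᶜ, Ψ ω ∂P) = (1 + ξ₁ ^ 2) / C * (P tᶜ).toReal := by
    rw [← Measure.restrict_congr_set hstc, haux0.1, measure_congr hstc]
  have hsum : (P t).toReal + (P tᶜ).toReal = 1 := by
    have := prob_compl_eq_one_sub (μ := P) ht
    rw [this, ENNReal.toReal_sub_of_le prob_le_one (by simp)]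
    simp
  unfold covE
  rw [hPsZ, hPZ, ← hsplit, hrt, hrtc]
  have hc : (P tᶜ).toReal = 1 - (P t).toReal := by linarith
  rw [hc]
  ring
end
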